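/- The set of all (a,b) ∈ ℝ² satisfying 15a + (6/5)b > 0, 15a + (7/10)b > 0, 15a + b > 0, 15a + (4/5)b > 0, 15a + (13/10)b > 0, 15a + (11/10)b > 0, 15a + (3/5)b > 0, 15a + (8/5)b > 0, 15a + (2/5)b > 0, 15a + (9/10)b > 0, 15a + (7/5)b > 0, 15a + (1/2)b > 0 and 15a + (3/2)b > 0 is contained in the union of the topological interiors of the conical hull of {(0, 1), (1/5, 0), (1/9, -2/3)}, the conical hull of {(0, 1), (1/45, 2/3), (-1/15, 2)}, the conical hull of {(1/9, -2/3), (2/15, -1), (1/5, -2)}, and the conical hull of {(1/45, 2/3), (2/15, -1), (2/15, 0)} in ℝ². -/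
import Mathlib


/-- The conical hull of three vectors in `ℝ × ℝ`: all linear combinations
with nonnegative real coefficients. -/
def coneHull3 (v₁ v₂ v₃ : ℝ × ℝ) : Set (ℝ × ℝ) :=
  {x | ∃ c₁ c₂ c₃ : ℝ, 0 ≤ c₁ ∧ 0 ≤ c₂ ∧ 0 ≤ c₃ ∧ x = c₁ • v₁ + c₂ • v₂ + c₃ • v₃}

lemma open2 (a b c d : ℝ) :
    IsOpen {p : ℝ × ℝ | 0 < a * p.1 + b * p.2 ∧ 0 < c * p.1 + d * p.2} := by
  apply IsOpen.inter <;>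
    exact isOpen_lt continuous_const
      ((continuous_const.mul continuous_fst).add (continuous_const.mul continuous_snd))

lemma U1sub : {p : ℝ × ℝ | 0 < 1 * p.1 + 0 * p.2 ∧ 0 < 6 * p.1 + 1 * p.2} ⊆
    interior (coneHull3 (0, 1) (1/5, 0) (1/9, -2/3)) := by
  apply interior_maximal _ (open2 1 0 6 1)
  rintro ⟨x, y⟩ ⟨h1, h2⟩
  simp only [Set.mem_setOf_eq] at h1 h2
  exact ⟨6*x+y, 0, 9*x, by linarith, le_refl 0, by linarith,
    by apply Prod.ext <;> simp <;> ring⟩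

lemma U2sub : {p : ℝ × ℝ | 0 < 30 * p.1 + 1 * p.2 ∧ 0 < (-30) * p.1 + 1 * p.2} ⊆
    interior (coneHull3 (0, 1) (1/45, 2/3) (-1/15, 2)) := by
  apply interior_maximal _ (open2 30 1 (-30) 1)
  rintro ⟨x, y⟩ ⟨h1, h2⟩
  simp only [Set.mem_setOf_eq] at h1 h2
  exact ⟨0, (90*x+3*y)/4, (y-30*x)/4, le_refl 0, by linarith, by linarith,
    by apply Prod.ext <;> simp <;> ring⟩

lemma U3sub : {p : ℝ × ℝ | 0 < 10 * p.1 + 1 * p.2 ∧ 0 < (-6) * p.1 + (-1) * p.2} ⊆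
    interior (coneHull3 (1/9, -2/3) (2/15, -1) (1/5, -2)) := by
  apply interior_maximal _ (open2 10 1 (-6) (-1))
  rintro ⟨x, y⟩ ⟨h1, h2⟩
  simp only [Set.mem_setOf_eq] at h1 h2
  exact ⟨(90*x+9*y)/4, 0, (-(30*x+5*y))/4, by linarith, le_refl 0, by linarith,
    by apply Prod.ext <;> simp <;> ring⟩

lemma U4sub : {p : ℝ × ℝ | 0 < 15 * p.1 + 2 * p.2 ∧ 0 < 30 * p.1 + (-1) * p.2} ⊆
    interior (coneHull3 (1/45, 2/3) (2/15, -1) (2/15, 0)) := by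
  apply interior_maximal _ (open2 15 2 30 (-1))
  rintro ⟨x, y⟩ ⟨h1, h2⟩
  simp only [Set.mem_setOf_eq] at h1 h2
  exact ⟨(45*x+6*y)/5, (30*x-y)/5, 0, by linarith, by linarith, le_refl 0,
    by apply Prod.ext <;> simp <;> ring⟩

theorem stmt_12 :
    {p : ℝ × ℝ | 15 * p.1 + (6/5) * p.2 > 0 ∧
      15 * p.1 + (7/10) * p.2 > 0 ∧
      15 * p.1 + p.2 > 0 ∧
      15 * p.1 + (4/5) * p.2 > 0 ∧
      15 * p.1 + (13/10) * p.2 > 0 ∧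
      15 * p.1 + (11/10) * p.2 > 0 ∧
      15 * p.1 + (3/5) * p.2 > 0 ∧
      15 * p.1 + (8/5) * p.2 > 0 ∧
      15 * p.1 + (2/5) * p.2 > 0 ∧
      15 * p.1 + (9/10) * p.2 > 0 ∧
      15 * p.1 + (7/5) * p.2 > 0 ∧
      15 * p.1 + (1/2) * p.2 > 0 ∧
      15 * p.1 + (3/2) * p.2 > 0} ⊆
      interior (coneHull3 (0, 1) (1/5, 0) (1/9, -2/3)) ∪
      interior (coneHull3 (0, 1) (1/45, 2/3) (-1/15, 2)) ∪
      interior (coneHull3 (1/9, -2/3) (2/15, -1) (1/5, -2)) ∪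
      interior (coneHull3 (1/45, 2/3) (2/15, -1) (2/15, 0)) := by
  rintro ⟨x, y⟩ ⟨_, _, _, _, _, _, _, h8, h9, _, _, _, _⟩
  simp only [Set.mem_setOf_eq] at h8 h9 ⊢
  -- h8 : 15x + (8/5)y > 0, h9 : 15x + (2/5)y > 0
  by_cases hc1 : 0 < x ∧ 0 < 6*x + y
  · exact Or.inl (Or.inl (Or.inl (U1sub ⟨by linarith [hc1.1], by linarith [hc1.2]⟩)))
  by_cases hc2 : 30*x < y
  · refine Or.inl (Or.inl (Or.inr (U2sub ⟨?_, by linarith⟩)))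
    nlinarith
  by_cases hc3 : 6*x + y < 0
  · refine Or.inl (Or.inr (U3sub ⟨?_, by linarith⟩))
    nlinarith
  · push_neg at hc1 hc2 hc3
    have hlt : y < 30 * x := by
      rcases lt_or_eq_of_le hc2 with h | h
      · exact h
      · exfalso
        have hx : 0 < x := by nlinarith
        have := hc1 hx
        nlinarith
    refine Or.inr (U4sub ⟨?_, by simp only [Set.mem_setOf_eq]; linarith⟩)
    rcases lt_or_ge 0 x with hx | hx
    · have := hc1 hx; linarith
    · nlinarith
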